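/- Let A, B, C : [0, ∞) → ℝ be differentiable functions, positive for all t ≥ 0, satisfying the Nil Ricci-flow system A'(t) = −A(t)²/(B(t)C(t)), B'(t) = A(t)/C(t), C'(t) = A(t)/B(t) for all t ≥ 0. Then the products A(t)·B(t) and A(t)·C(t) are constant in t: A(t)B(t) = A(0)B(0) and A(t)C(t) = A(0)C(0) for all t ≥ 0. -/

import Mathlib

open Set

lemma const_of_derivWithin_zero (f : ℝ → ℝ)
    (hf : ∀ t ≥ (0:ℝ), HasDerivWithinAt f 0 (Ici 0) t) :
    ∀ t ≥ (0:ℝ), f t = f 0 := by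
  intro t ht
  have hconv : Convex ℝ (Ici (0:ℝ)) := convex_Ici 0
  have hdiff : DifferentiableOn ℝ f (Ici 0) := fun x hx =>
    (hf x hx).differentiableWithinAt
  refine hconv.is_const_of_fderivWithin_eq_zero hdiff ?_ ht (self_mem_Ici)
  intro x hx
  have := (hf x hx).hasFDerivWithinAt.fderivWithin (uniqueDiffOn_Ici 0 x hx)
  rw [this]
  ext y
  simp

/-- **Nil Ricci flow: conserved quantities.**
If `A, B, C : [0,∞) → ℝ` are differentiable, positive functions satisfying the Nil
Ricci-flow system `A' = −A²/(BC)`, `B' = A/C`, `C' = A/B`, then the products `A·B`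
and `A·C` are constant in `t`. -/
theorem nil_ricci_flow_conserved_products
    (A B C : ℝ → ℝ)
    (hApos : ∀ t ≥ (0:ℝ), 0 < A t)
    (hBpos : ∀ t ≥ (0:ℝ), 0 < B t)
    (hCpos : ∀ t ≥ (0:ℝ), 0 < C t)
    (hA : ∀ t ≥ (0:ℝ),
      HasDerivWithinAt A (-(A t ^ 2) / (B t * C t)) (Ici 0) t)
    (hB : ∀ t ≥ (0:ℝ),
      HasDerivWithinAt B (A t / C t) (Ici 0) t)
    (hC : ∀ t ≥ (0:ℝ),
      HasDerivWithinAt C (A t / B t) (Ici 0) t) :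
    ∀ t ≥ (0:ℝ), A t * B t = A 0 * B 0 ∧ A t * C t = A 0 * C 0 := by
  have hAB : ∀ t ≥ (0:ℝ), HasDerivWithinAt (fun t => A t * B t) 0 (Ici 0) t := by
    intro t ht
    have h : HasDerivWithinAt (fun t => A t * B t) _ (Ici 0) t := (hA t ht).mul (hB t ht)
    have hB0 := (hBpos t ht).ne'
    have hC0 := (hCpos t ht).ne'
    convert h using 1
    field_simp
    ring
  have hAC : ∀ t ≥ (0:ℝ), HasDerivWithinAt (fun t => A t * C t) 0 (Ici 0) t := by
    intro t ht
    have h : HasDerivWithinAt (fun t => A t * C t) _ (Ici 0) t := (hA t ht).mul (hC t ht)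
    have hB0 := (hBpos t ht).ne'
    have hC0 := (hCpos t ht).ne'
    convert h using 1
    field_simp
    ring
  intro t ht
  exact ⟨const_of_derivWithin_zero _ hAB t ht, const_of_derivWithin_zero _ hAC t ht⟩
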